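/- arXiv:2312.16738 — 3 statements merged into one kernel-verified Lean document; each statement's English description precedes it below -/
import Mathlib

section
/- Let G, G^I : ℝ → ℂ^{p×m} be matrix-valued functions with G^I(ω) = G(ω)(I + Z G(ω))^{-1} where Z = (-Π_aa)^{-1}Π_ζa^T and I + Z G(ω) is invertible. Let Π = [[Π_ζζ, Π_ζa],[Π_ζa^T, Π_aa]] and Π^I = diag(Π/Π_aa, Π_aa) with Π/Π_aa the Schur complement. Then for every v ∈ ℂ^m, setting u = (I + Z G(ω))v, one has [G(ω); -I]v conjugate-quadratic-form under Π equals [G^I(ω); -I]u conjugate-quadratic-form under Π^I, i.e. v^H [G(ω);-I]^H Π [G(ω);-I] v = u^H [G^I(ω);-I]^H Π^I [G^I(ω);-I] u. -/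
/-! Block LDLᵀ factorisation with the Schur complement gives `Π = Uᵀ Πᴵ U` for
`U = [[I, 0], [Π_aa⁻¹ Π_ζaᵀ, I]] = [[I, 0], [-Z, I]]`. Hence the left side is the `Πᴵ`-form of
`U [G; -I] v = [G v; -(I + Z G) v] = [Gᴵ u; -u]`, as `G v = Gᴵ u`. -/

open Matrix

namespace Matrix

theorem conjTranspose_map_ofReal {m n : Type*} (A : Matrix m n ℝ) :
    (A.map Complex.ofReal)ᴴ = Aᵀ.map Complex.ofReal := by
  rw [← conjTranspose_eq_transpose_of_trivial, conjTranspose_map _ fun _ => by simp]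

theorem map_ofReal_mul {l m n : Type*} [Fintype m] (A : Matrix l m ℝ) (B : Matrix m n ℝ) :
    (A * B).map Complex.ofReal = A.map Complex.ofReal * B.map Complex.ofReal :=
  Matrix.map_mul (f := Complex.ofRealHom)

variable {m n α : Type*} [Fintype m] [Fintype n]

theorem inv_neg_of_isUnit [DecidableEq n] [CommRing α] {A : Matrix n n α} (hA : IsUnit A) :
    (-A)⁻¹ = -A⁻¹ :=
  inv_eq_left_inv (by rw [neg_mul_neg, nonsing_inv_mul _ ((isUnit_iff_isUnit_det A).mp hA)])

theorem fromBlocks_eq_transpose_mul_fromBlocks_schur_mul [DecidableEq m] [DecidableEq n]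
    [CommRing α] (A : Matrix m m α) (B : Matrix m n α) {D : Matrix n n α} (hD : D.IsSymm)
    (hDu : IsUnit D) :
    fromBlocks A B Bᵀ D = (fromBlocks 1 0 (D⁻¹ * Bᵀ) 1)ᵀ *
      fromBlocks (A - B * D⁻¹ * Bᵀ) 0 0 D * fromBlocks 1 0 (D⁻¹ * Bᵀ) 1 := by
  obtain ⟨_⟩ := hDu.nonempty_invertible
  rw [fromBlocks_eq_of_invertible₂₂, invOf_eq_nonsing_inv, fromBlocks_transpose,
    transpose_mul, transpose_transpose, transpose_nonsing_inv, hD.eq]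
  simp only [transpose_one, transpose_zero]

theorem fromBlocks_one_zero_mul_fromRows_neg_one [DecidableEq m] [DecidableEq n] [Ring α]
    (K : Matrix n m α) {G H : Matrix m n α} (h : H * (1 - K * G) = G) :
    (fromBlocks 1 0 K 1 : Matrix (m ⊕ n) (m ⊕ n) α) * fromRows G (-1 : Matrix n n α) =
      fromRows H (-1) * (1 - K * G) := by
  rw [fromBlocks_mul_fromRows, fromRows_mul, h]
  simp [sub_eq_add_neg]

theorem star_dotProduct_conjTranspose_mul_mul_mulVec [CommSemiring α] [StarRing α]
    (M : Matrix m n α) (P : Matrix m m α) (v : n → α) :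
    star v ⬝ᵥ ((Mᴴ * P * M) *ᵥ v) = star (M *ᵥ v) ⬝ᵥ (P *ᵥ (M *ᵥ v)) := by
  rw [star_mulVec, ← dotProduct_mulVec, mulVec_mulVec, mulVec_mulVec]

end Matrix

theorem stmt8_general {p m : ℕ}
    (Pzz : Matrix (Fin p) (Fin p) ℝ) (Pza : Matrix (Fin p) (Fin m) ℝ)
    (Paa : Matrix (Fin m) (Fin m) ℝ) (hPaa : Paa.IsSymm)
    (hneg : (-Paa).PosDef)
    (G GI : Matrix (Fin p) (Fin m) ℂ) (v : Fin m → ℂ) :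
    let Zc : Matrix (Fin m) (Fin p) ℂ := ((-Paa)⁻¹ * Pza.transpose).map Complex.ofReal
    let Pi : Matrix (Fin p ⊕ Fin m) (Fin p ⊕ Fin m) ℂ :=
      (fromBlocks Pzz Pza Pza.transpose Paa).map Complex.ofReal
    let PiI : Matrix (Fin p ⊕ Fin m) (Fin p ⊕ Fin m) ℂ :=
      (fromBlocks (Pzz + Pza * (-Paa)⁻¹ * Pza.transpose) 0 0 Paa).map Complex.ofReal
    let u : Fin m → ℂ := (1 + Zc * G) *ᵥ v
    IsUnit (1 + Zc * G) → GI = G * (1 + Zc * G)⁻¹ →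
      star v ⬝ᵥ (((fromRows G (-1 : Matrix (Fin m) (Fin m) ℂ)).conjTranspose * Pi * fromRows G (-1 : Matrix (Fin m) (Fin m) ℂ)) *ᵥ v)
        = star u ⬝ᵥ (((fromRows GI (-1 : Matrix (Fin m) (Fin m) ℂ)).conjTranspose * PiI * fromRows GI (-1 : Matrix (Fin m) (Fin m) ℂ)) *ᵥ u) := by
  intro Zc Pi PiI u hW hGI
  have hPaa_unit : IsUnit Paa := (IsUnit.neg_iff Paa).mp hneg.isUnit
  set K : Matrix (Fin m) (Fin p) ℝ := Paa⁻¹ * Pzaᵀ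
  set U : Matrix (Fin p ⊕ Fin m) (Fin p ⊕ Fin m) ℂ := (fromBlocks 1 0 K 1).map Complex.ofReal
  have hZc : Zc = -K.map Complex.ofReal := by
    simp only [Zc, K, inv_neg_of_isUnit hPaa_unit, Matrix.neg_mul]
    exact Matrix.map_neg _ Complex.ofReal_neg _
  have hPi : Pi = Uᴴ * PiI * U := by
    have hSchur : Pzz - Pza * Paa⁻¹ * Pzaᵀ = Pzz + Pza * (-Paa)⁻¹ * Pzaᵀ := by
      rw [inv_neg_of_isUnit hPaa_unit, Matrix.mul_neg, Matrix.neg_mul, sub_eq_add_neg]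
    simp only [Pi, PiI, U, conjTranspose_map_ofReal]
    rw [fromBlocks_eq_transpose_mul_fromBlocks_schur_mul Pzz Pza hPaa hPaa_unit, hSchur,
      map_ofReal_mul, map_ofReal_mul]
  have hGIW : GI * (1 + Zc * G) = G := by
    rw [hGI]
    exact nonsing_inv_mul_cancel_right _ _ ((isUnit_iff_isUnit_det _).mp hW)
  have hrows : U * fromRows G (-1 : Matrix (Fin m) (Fin m) ℂ)
      = fromRows GI (-1 : Matrix (Fin m) (Fin m) ℂ) * (1 + Zc * G) := by
    rw [hZc, Matrix.neg_mul, ← sub_eq_add_neg] at hGIW ⊢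
    simpa only [U, fromBlocks_map, Matrix.map_one _ Complex.ofReal_zero Complex.ofReal_one,
      Matrix.map_zero _ Complex.ofReal_zero]
      using fromBlocks_one_zero_mul_fromRows_neg_one _ hGIW
  calc _ = star v ⬝ᵥ (((U * fromRows G (-1 : Matrix (Fin m) (Fin m) ℂ))ᴴ * PiI
          * (U * fromRows G (-1 : Matrix (Fin m) (Fin m) ℂ))) *ᵥ v) := by
        simp only [hPi, conjTranspose_mul, Matrix.mul_assoc]
    _ = _ := by
      rw [star_dotProduct_conjTranspose_mul_mul_mulVec, hrows, ← mulVec_mulVec,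
        ← star_dotProduct_conjTranspose_mul_mul_mulVec]

/-- Lemma 6.5: transformed quadratic form identity
vᴴ[G;-I]ᴴ Π [G;-I]v = uᴴ[Gᴵ;-I]ᴴ Πᴵ [Gᴵ;-I]u with u = (I+ZG)v. -/
theorem stmt8 {p m : ℕ}
    (Pzz : Matrix (Fin p) (Fin p) ℝ) (Pza : Matrix (Fin p) (Fin m) ℝ)
    (Paa : Matrix (Fin m) (Fin m) ℝ) (hPzz : Pzz.IsSymm) (hPaa : Paa.IsSymm)
    (hneg : (-Paa).PosDef)
    (G GI : Matrix (Fin p) (Fin m) ℂ) (v : Fin m → ℂ) :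
    let Zc : Matrix (Fin m) (Fin p) ℂ := ((-Paa)⁻¹ * Pza.transpose).map Complex.ofReal
    let Pi : Matrix (Fin p ⊕ Fin m) (Fin p ⊕ Fin m) ℂ :=
      (fromBlocks Pzz Pza Pza.transpose Paa).map Complex.ofReal
    let PiI : Matrix (Fin p ⊕ Fin m) (Fin p ⊕ Fin m) ℂ :=
      (fromBlocks (Pzz + Pza * (-Paa)⁻¹ * Pza.transpose) 0 0 Paa).map Complex.ofReal
    let u : Fin m → ℂ := (1 + Zc * G) *ᵥ v
    IsUnit (1 + Zc * G) → GI = G * (1 + Zc * G)⁻¹ →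
      star v ⬝ᵥ (((fromRows G (-1 : Matrix (Fin m) (Fin m) ℂ)).conjTranspose * Pi * fromRows G (-1 : Matrix (Fin m) (Fin m) ℂ)) *ᵥ v)
        = star u ⬝ᵥ (((fromRows GI (-1 : Matrix (Fin m) (Fin m) ℂ)).conjTranspose * PiI * fromRows GI (-1 : Matrix (Fin m) (Fin m) ℂ)) *ᵥ u) :=
  stmt8_general Pzz Pza Paa hPaa hneg G GI v
end

section
/- Let x : [t₀-h, ∞) → ℝⁿ be a solution of the linear delay equation ẋ(t) = Ã₀ x(t) + Ã₁ x(t-h) whose zero equilibrium is uniformly stable. Then for every α ≥ 0, setting δ(α) = δ_s(1)·α/(‖Ã₀‖ + ‖Ã₁‖) (where δ_s is the uniform-stability modulus at ε=1), one has for all t₁ ≥ t₀ ≥ 0 with t₁ - t₀ ≤ δ(α): ‖x(t₁) - x(t₀)‖ ≤ α · max_{θ∈[-h,0]} ‖x(t₀+θ)‖. In particular δ can be chosen as a linear function of α. -/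
open Matrix

attribute [local instance] Matrix.linftyOpNormedAddCommGroup

/-- Appendix Lemma A.1: a linear modulus of equicontinuity for solutions of a
uniformly stable linear delay equation. -/
theorem stmt16 {n : ℕ} (h : ℝ) (hh : 0 < h)
    (A₀ A₁ : Matrix (Fin n) (Fin n) ℝ)
    (x : ℝ → Fin n → ℝ)
    (hx : ∀ t ≥ (0:ℝ), HasDerivAt x (A₀ *ᵥ x t + A₁ *ᵥ x (t - h)) t)
    (δs : ℝ) (hδs : 0 < δs)
    (hstab : ∀ t₀ ≥ (0:ℝ), ∀ t ≥ t₀ - h,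
      ‖x t‖ ≤ (⨆ θ : Set.Icc (-h) (0:ℝ), ‖x (t₀ + θ)‖) / δs) :
    ∀ α ≥ (0:ℝ), ∀ t₀ t₁ : ℝ, 0 ≤ t₀ → t₀ ≤ t₁ →
      t₁ - t₀ ≤ δs * α / (‖A₀‖ + ‖A₁‖) →
      ‖x t₁ - x t₀‖ ≤ α * ⨆ θ : Set.Icc (-h) (0:ℝ), ‖x (t₀ + θ)‖ := by
  intro α hα t₀ t₁ ht₀ ht₀₁ hδ
  set M : ℝ := ⨆ θ : Set.Icc (-h) (0:ℝ), ‖x (t₀ + θ)‖ with hM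
  have hMnn : 0 ≤ M := Real.iSup_nonneg fun θ => norm_nonneg _
  set B : ℝ := ‖A₀‖ + ‖A₁‖ with hB
  have hBnn : 0 ≤ B := add_nonneg (norm_nonneg _) (norm_nonneg _)
  rcases eq_or_lt_of_le hBnn with hB0 | hBpos
  · -- degenerate case : B = 0, so t₁ = t₀
    have : t₁ - t₀ ≤ 0 := by
      rw [← hB0, div_zero] at hδ; exact hδ
    have ht : t₁ = t₀ := le_antisymm (by linarith) ht₀₁
    rw [ht, sub_self, norm_zero]
    exact mul_nonneg hα hMnn
  · -- main case
    set C : ℝ := B * (M / δs) with hC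
    have hbound : ∀ s ∈ Set.Icc t₀ t₁, ‖A₀ *ᵥ x s + A₁ *ᵥ x (s - h)‖ ≤ C := by
      intro s hs
      have hs1 : ‖x s‖ ≤ M / δs := hstab t₀ ht₀ s (by rcases hs with ⟨h1, _⟩; linarith)
      have hs2 : ‖x (s - h)‖ ≤ M / δs :=
        hstab t₀ ht₀ (s - h) (by rcases hs with ⟨h1, _⟩; linarith)
      calc ‖A₀ *ᵥ x s + A₁ *ᵥ x (s - h)‖
          ≤ ‖A₀ *ᵥ x s‖ + ‖A₁ *ᵥ x (s - h)‖ := norm_add_le _ _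
        _ ≤ ‖A₀‖ * ‖x s‖ + ‖A₁‖ * ‖x (s - h)‖ := by
            gcongr <;> exact Matrix.linfty_opNorm_mulVec _ _
        _ ≤ ‖A₀‖ * (M / δs) + ‖A₁‖ * (M / δs) := by
            gcongr
        _ = C := by rw [hC, hB]; ring
    have hderiv : ∀ s ∈ Set.Icc t₀ t₁,
        HasDerivWithinAt x (A₀ *ᵥ x s + A₁ *ᵥ x (s - h)) (Set.Icc t₀ t₁) s := by
      intro s hs
      exact (hx s (le_trans ht₀ hs.1)).hasDerivWithinAt
    have key := (convex_Icc t₀ t₁).norm_image_sub_le_of_norm_hasDerivWithin_le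
      hderiv hbound (Set.left_mem_Icc.mpr ht₀₁) (Set.right_mem_Icc.mpr ht₀₁)
    have hCnn : 0 ≤ C := mul_nonneg hBnn (div_nonneg hMnn hδs.le)
    have : ‖x t₁ - x t₀‖ ≤ C * (δs * α / B) := by
      calc ‖x t₁ - x t₀‖ ≤ C * ‖t₁ - t₀‖ := key
        _ = C * (t₁ - t₀) := by rw [Real.norm_of_nonneg (by linarith)]
        _ ≤ C * (δs * α / B) := by exact mul_le_mul_of_nonneg_left hδ hCnn
    calc ‖x t₁ - x t₀‖ ≤ C * (δs * α / B) := this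
      _ = α * M := by
          rw [hC]; field_simp
end

section
/- Let V(φ) = φ(0)^T P_xx φ(0) + 2∫_{-h}^0 φ(0)^T P_xz(η)φ(η)dη + ∫∫_{[-h,0]²} φ(ξ)^T P_zz(ξ,η)φ(η)dη dξ + ∫_{-h}^0 φ(η)^T P_d φ(η)dη, and define v(φ) = P_xx φ(0) + ∫_{-h}^0 P_xz(η)φ(η)dη. If x solves ẋ(t) = f(x_t) + g(x_t) and y solves ẏ(t) = f(y_t), with both having the same segment at time t, then the (upper right) derivative of V along the perturbed solution satisfies D_{(f+g)}V(x_t) = D_f V(x_t) + 2 v(x_t)^T g(x_t). -/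
/-! Write `d = x - y`. Since `V` is quadratic,
`V(x_s) - V(y_s) = d(s) ⬝ᵥ (Pxx (x(s) + y(s)) + 2 ∫ Pxz(η) x(s+η) dη) + R(s)`, where `d` enters the
remainder `R(s)` only through values `d(s+η)` under an integral over `η ∈ [-h, 0]`, so that
`|R(s)| ≤ C ∫_{-h}^0 ‖d(s+η)‖ dη` for `s` near `t`. As `d` vanishes on `[t-h, t]`, this sliding
integral has derivative `‖d(t)‖ - ‖d(t-h)‖ = 0` at `t`, hence `R` contributes nothing to the
derivative. Finally `d(t) = 0` and `d'(t) = g(x_t)` (the functional `f` only sees the common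
segment), so the leading term has derivative `g(x_t) ⬝ᵥ 2 (Pxx x(t) + ∫ Pxz(η) x(t+η) dη)`. -/

open Asymptotics Filter Matrix Set Topology intervalIntegral

section Segments

variable {E : Type*} [NormedAddCommGroup E]

theorem hasDerivAt_integral_comp_add [NormedSpace ℝ E] [CompleteSpace E] {F : ℝ → E}
    (hF : Continuous F) (a b t : ℝ) :
    HasDerivAt (fun s => ∫ η in a..b, F (s + η)) (F (t + b) - F (t + a)) t := by
  have hwindow : (fun s => ∫ η in a..b, F (s + η)) =
      fun s => (∫ u in (0 : ℝ)..s + b, F u) - ∫ u in (0 : ℝ)..s + a, F u := by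
    funext s
    rw [integral_comp_add_left F s,
      integral_interval_sub_left (hF.intervalIntegrable _ _) (hF.intervalIntegrable _ _)]
  rw [hwindow]
  exact ((hF.integral_hasStrictDerivAt 0 _).hasDerivAt.comp_add_const t b).sub
    ((hF.integral_hasStrictDerivAt 0 _).hasDerivAt.comp_add_const t a)

theorem hasDerivAt_zero_of_isBigO [NormedSpace ℝ E] {R : ℝ → E} {N : ℝ → ℝ} {t : ℝ}
    (hN : N =o[𝓝 t] fun s => s - t) (hR : R =O[𝓝 t] N) : HasDerivAt R 0 t := by
  have hRo := hR.trans_isLittleO hN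
  have hRt : R t = 0 := hRo.isBigO.eq_zero_imp.self_of_nhds (sub_self t)
  exact hasDerivAt_iff_isLittleO.2 (by simpa [hRt] using hRo)

theorem norm_integral_sub_integral_le [NormedSpace ℝ E] {f g : ℝ → E} {B : ℝ → ℝ} {a b : ℝ}
    (hab : a ≤ b)
    (hf : IntervalIntegrable f MeasureTheory.volume a b)
    (hg : IntervalIntegrable g MeasureTheory.volume a b)
    (hB : IntervalIntegrable B MeasureTheory.volume a b)
    (hle : ∀ η ∈ Icc a b, ‖f η - g η‖ ≤ B η) :
    ‖(∫ η in a..b, f η) - ∫ η in a..b, g η‖ ≤ ∫ η in a..b, B η := by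
  rw [← integral_sub hf hg]
  exact norm_integral_le_of_norm_le hab
    (MeasureTheory.ae_of_all _ fun η hη => hle η (Ioc_subset_Icc_self hη)) hB

theorem exists_eventually_norm_segment_le {x : ℝ → E} (hx : Continuous x) (h t : ℝ) :
    ∃ K, ∀ᶠ s in 𝓝 t, ∀ η ∈ Icc (-h) 0, ‖x (s + η)‖ ≤ K := by
  obtain ⟨K, hK⟩ := (isCompact_Icc (a := t - 1 - h) (b := t + 1)).exists_bound_of_continuousOn
    hx.continuousOn
  refine ⟨K, ?_⟩
  filter_upwards [Ioo_mem_nhds (show t - 1 < t by linarith) (show t < t + 1 by linarith)]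
    with s hs η hη
  exact hK _ ⟨by linarith [hs.1, hη.1], by linarith [hs.2, hη.2]⟩

theorem exists_eventually_norm_segments_le {x y : ℝ → E} (hx : Continuous x) (hy : Continuous y)
    (h t : ℝ) : ∃ K, ∀ᶠ s in 𝓝 t, ∀ η ∈ Icc (-h) 0, ‖x (s + η)‖ ≤ K ∧ ‖y (s + η)‖ ≤ K := by
  obtain ⟨Kx, hKx⟩ := exists_eventually_norm_segment_le hx h t
  obtain ⟨Ky, hKy⟩ := exists_eventually_norm_segment_le hy h t
  refine ⟨max Kx Ky, ?_⟩
  filter_upwards [hKx, hKy] with s hsx hsy η hη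
  exact ⟨(hsx η hη).trans (le_max_left _ _), (hsy η hη).trans (le_max_right _ _)⟩

noncomputable def segmentL1Dist (h : ℝ) (x y : ℝ → E) (s : ℝ) : ℝ :=
  ∫ η in (-h)..0, ‖x (s + η) - y (s + η)‖

theorem isLittleO_segmentL1Dist {h t : ℝ} {x y : ℝ → E} (hh : 0 ≤ h) (hx : Continuous x)
    (hy : Continuous y) (hsame : ∀ θ ∈ Icc (-h) 0, x (t + θ) = y (t + θ)) :
    segmentL1Dist h x y =o[𝓝 t] fun s => s - t := by
  have hderiv := hasDerivAt_integral_comp_add (F := fun u => ‖x u - y u‖) (by fun_prop) (-h) 0 t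
  have hxt : x t = y t := by simpa using hsame 0 ⟨by linarith, le_rfl⟩
  have hxth : x (t + -h) = y (t + -h) := hsame (-h) ⟨le_rfl, by linarith⟩
  have hzero : ∫ η in (-h)..0, ‖x (t + η) - y (t + η)‖ = 0 := by
    rw [integral_congr (g := fun _ => 0), integral_zero]
    intro η hη
    rw [uIcc_of_le (by linarith)] at hη
    simp [hsame η hη]
  show (fun s => ∫ η in (-h)..0, ‖x (s + η) - y (s + η)‖) =o[𝓝 t] fun s => s - t
  simpa [hxt, hxth, hzero] using hderiv.isLittleO

end Segments

section DotProduct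

variable {ι : Type*} [Fintype ι]

theorem HasDerivAt.dotProduct_of_eq_zero {u w : ℝ → ι → ℝ} {u' : ι → ℝ} {t : ℝ}
    (hu : HasDerivAt u u' t) (hut : u t = 0) (hw : ContinuousAt w t) :
    HasDerivAt (fun s => u s ⬝ᵥ w s) (u' ⬝ᵥ w t) t := by
  rw [hasDerivAt_iff_tendsto_slope] at hu ⊢
  have hslope : Tendsto (fun s => slope u t s ⬝ᵥ w s) (𝓝[≠] t) (𝓝 (u' ⬝ᵥ w t)) :=
    (continuous_fst.dotProduct continuous_snd).continuousAt.tendsto.comp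
      (hu.prodMk_nhds (hw.tendsto.mono_left nhdsWithin_le_nhds))
  refine hslope.congr fun s => ?_
  simp only [slope_def_module, hut, sub_zero, smul_dotProduct, zero_dotProduct]

theorem dotProduct_intervalIntegral (a : ι → ℝ) {v : ℝ → ι → ℝ} {lo hi : ℝ}
    (hv : IntervalIntegrable v MeasureTheory.volume lo hi) :
    a ⬝ᵥ (∫ η in lo..hi, v η) = ∫ η in lo..hi, a ⬝ᵥ v η :=
  ((dotProductBilin ℝ ℝ a).toContinuousLinearMap.intervalIntegral_comp_comm hv).symm

theorem dotProduct_mulVec_sub_dotProduct_mulVec {M : Matrix ι ι ℝ} (hM : M.IsSymm)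
    (a b : ι → ℝ) : a ⬝ᵥ (M *ᵥ a) - b ⬝ᵥ (M *ᵥ b) = (a - b) ⬝ᵥ (M *ᵥ (a + b)) := by
  have hba : b ⬝ᵥ (M *ᵥ a) = a ⬝ᵥ (M *ᵥ b) := by
    rw [dotProduct_mulVec, ← mulVec_transpose, hM.eq, dotProduct_comm]
  simp only [mulVec_add, dotProduct_add, sub_dotProduct, hba]
  ring

theorem abs_dotProduct_mulVec_le (M : Matrix ι ι ℝ) (u v : ι → ℝ) :
    |u ⬝ᵥ (M *ᵥ v)| ≤ (∑ i, ∑ j, |M i j|) * (‖u‖ * ‖v‖) := by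
  have hentry : ∀ i j, |u i * (M i j * v j)| ≤ |M i j| * (‖u‖ * ‖v‖) := fun i j => by
    rw [abs_mul, abs_mul, mul_left_comm, ← Real.norm_eq_abs (u i), ← Real.norm_eq_abs (v j)]
    gcongr
    exacts [norm_le_pi_norm u i, norm_le_pi_norm v j]
  calc |u ⬝ᵥ (M *ᵥ v)| = |∑ i, ∑ j, u i * (M i j * v j)| := by
        simp only [dotProduct, mulVec, Finset.mul_sum]
    _ ≤ ∑ i, ∑ j, |u i * (M i j * v j)| :=
        (Finset.abs_sum_le_sum_abs _ _).trans
          (Finset.sum_le_sum fun i _ => Finset.abs_sum_le_sum_abs _ _)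
    _ ≤ ∑ i, ∑ j, |M i j| * (‖u‖ * ‖v‖) := by gcongr with i _ j _; exact hentry i j
    _ = (∑ i, ∑ j, |M i j|) * (‖u‖ * ‖v‖) := by simp only [Finset.sum_mul]

theorem abs_dotProduct_mulVec_sub_le {M : Matrix ι ι ℝ} {a b a' b' : ι → ℝ} {C K : ℝ}
    (hM : ∑ i, ∑ j, |M i j| ≤ C) (hb : ‖b‖ ≤ K) (ha' : ‖a'‖ ≤ K) :
    |a ⬝ᵥ (M *ᵥ b) - a' ⬝ᵥ (M *ᵥ b')| ≤ C * K * (‖a - a'‖ + ‖b - b'‖) := by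
  have hsplit : a ⬝ᵥ (M *ᵥ b) - a' ⬝ᵥ (M *ᵥ b') =
      (a - a') ⬝ᵥ (M *ᵥ b) + a' ⬝ᵥ (M *ᵥ (b - b')) := by
    simp only [sub_dotProduct, mulVec_sub, dotProduct_sub]; ring
  have hK : 0 ≤ K := (norm_nonneg b).trans hb
  have hC : 0 ≤ C := (by positivity : (0 : ℝ) ≤ ∑ i, ∑ j, |M i j|).trans hM
  rw [hsplit]
  calc _ ≤ |(a - a') ⬝ᵥ (M *ᵥ b)| + |a' ⬝ᵥ (M *ᵥ (b - b'))| := abs_add_le _ _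
    _ ≤ (∑ i, ∑ j, |M i j|) * (‖a - a'‖ * ‖b‖) + (∑ i, ∑ j, |M i j|) * (‖a'‖ * ‖b - b'‖) :=
        add_le_add (abs_dotProduct_mulVec_le M _ _) (abs_dotProduct_mulVec_le M _ _)
    _ ≤ C * (‖a - a'‖ * K) + C * (K * ‖b - b'‖) := by gcongr
    _ = C * K * (‖a - a'‖ + ‖b - b'‖) := by ring

theorem exists_sum_abs_entry_le {X : Type*} [TopologicalSpace X] {P : X → Matrix ι ι ℝ}
    (hP : Continuous P) {S : Set X} (hS : IsCompact S) :
    ∃ C, ∀ p ∈ S, ∑ i, ∑ j, |P p i j| ≤ C := by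
  obtain ⟨C, hC⟩ := hS.exists_bound_of_continuousOn
    (f := fun p => ∑ i, ∑ j, |P p i j|) (by fun_prop)
  exact ⟨C, fun p hp => (le_abs_self _).trans ((Real.norm_eq_abs _).symm.trans_le (hC p hp))⟩

end DotProduct

noncomputable section LyapunovKrasovskii

variable {ι : Type*} [Fintype ι]

def lyapunovKrasovskii (h : ℝ) (Pxx : Matrix ι ι ℝ) (Pxz : ℝ → Matrix ι ι ℝ)
    (Pzz : ℝ → ℝ → Matrix ι ι ℝ) (Pd : Matrix ι ι ℝ) (φ : ℝ → ι → ℝ) : ℝ :=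
  φ 0 ⬝ᵥ (Pxx *ᵥ φ 0) + 2 * (∫ η in (-h)..0, φ 0 ⬝ᵥ (Pxz η *ᵥ φ η))
    + (∫ ξ in (-h)..0, ∫ η in (-h)..0, φ ξ ⬝ᵥ (Pzz ξ η *ᵥ φ η))
    + ∫ η in (-h)..0, φ η ⬝ᵥ (Pd *ᵥ φ η)

/-- A binder `∫ η in a..b,` extends as far to the right as possible, so in the unparenthesized
expression on the left the `Pzz` and `Pd` terms lie inside the `Pxz` integral, and each enclosing
integral of a term constant in its variable contributes a factor `h`. -/
theorem nested_eq_lyapunovKrasovskii (h : ℝ) (Pxx : Matrix ι ι ℝ) {Pxz : ℝ → Matrix ι ι ℝ}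
    (hPxz : Continuous Pxz) {Pzz : ℝ → ℝ → Matrix ι ι ℝ}
    (hPzz : Continuous fun q : ℝ × ℝ => Pzz q.1 q.2) (Pd : Matrix ι ι ℝ) {φ : ℝ → ι → ℝ}
    (hφ : Continuous φ) :
    φ 0 ⬝ᵥ (Pxx *ᵥ φ 0)
      + 2 * ∫ η in (-h)..0, φ 0 ⬝ᵥ (Pxz η *ᵥ φ η)
      + ∫ ξ in (-h)..0, ∫ η in (-h)..0, φ ξ ⬝ᵥ (Pzz ξ η *ᵥ φ η)
      + ∫ η in (-h)..0, φ η ⬝ᵥ (Pd *ᵥ φ η)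
    = lyapunovKrasovskii h Pxx Pxz (fun ξ η => (2 * h) • Pzz ξ η) ((2 * h ^ 3) • Pd) φ := by
  set p := ∫ η in (-h)..0, φ η ⬝ᵥ (Pd *ᵥ φ η)
  have hinner : ∀ ξ, ∫ η in (-h)..0, (φ ξ ⬝ᵥ (Pzz ξ η *ᵥ φ η) + p) =
      (∫ η in (-h)..0, φ ξ ⬝ᵥ (Pzz ξ η *ᵥ φ η)) + h * p := fun ξ => by
    rw [integral_add (Continuous.intervalIntegrable (by fun_prop) _ _) intervalIntegrable_const,
      integral_const, smul_eq_mul, sub_neg_eq_add, zero_add]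
  rw [integral_add (Continuous.intervalIntegrable (by fun_prop) _ _) intervalIntegrable_const,
    integral_const, integral_congr fun ξ _ => hinner ξ,
    integral_add (Continuous.intervalIntegrable
      (continuous_parametric_intervalIntegral_of_continuous' (by fun_prop) _ _) _ _)
      intervalIntegrable_const, integral_const]
  simp only [lyapunovKrasovskii, smul_mulVec, dotProduct_smul, smul_eq_mul,
    integral_const_mul, sub_neg_eq_add, zero_add, p]
  ring

variable {h t : ℝ} {x y : ℝ → ι → ℝ}

theorem isBigO_integral_sub_segmentL1Dist (hh : 0 ≤ h) (hx : Continuous x) (hy : Continuous y)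
    (Pd : Matrix ι ι ℝ) :
    (fun s => (∫ η in (-h)..0, x (s + η) ⬝ᵥ (Pd *ᵥ x (s + η)))
      - ∫ η in (-h)..0, y (s + η) ⬝ᵥ (Pd *ᵥ y (s + η))) =O[𝓝 t] segmentL1Dist h x y := by
  obtain ⟨K, hK⟩ := exists_eventually_norm_segments_le hx hy h t
  refine IsBigO.of_bound ((∑ i, ∑ j, |Pd i j|) * K * 2) ?_
  filter_upwards [hK] with s hs
  have hN : 0 ≤ segmentL1Dist h x y s :=
    integral_nonneg (by linarith) fun _ _ => norm_nonneg _
  rw [Real.norm_of_nonneg hN]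
  calc _ ≤ ∫ η in (-h)..0, (∑ i, ∑ j, |Pd i j|) * K * 2 * ‖x (s + η) - y (s + η)‖ :=
        norm_integral_sub_integral_le (by linarith)
          (Continuous.intervalIntegrable (by fun_prop) _ _)
          (Continuous.intervalIntegrable (by fun_prop) _ _)
          (Continuous.intervalIntegrable (by fun_prop) _ _)
          fun η hη => (abs_dotProduct_mulVec_sub_le le_rfl (hs η hη).1 (hs η hη).2).trans_eq
            (by ring)
    _ = (∑ i, ∑ j, |Pd i j|) * K * 2 * segmentL1Dist h x y s := integral_const_mul _ _
theorem isBigO_integral_integral_sub_segmentL1Dist (hh : 0 ≤ h) (hx : Continuous x)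
    (hy : Continuous y) {P : ℝ → ℝ → Matrix ι ι ℝ} (hP : Continuous fun q : ℝ × ℝ => P q.1 q.2) :
    (fun s => (∫ ξ in (-h)..0, ∫ η in (-h)..0, x (s + ξ) ⬝ᵥ (P ξ η *ᵥ x (s + η)))
      - ∫ ξ in (-h)..0, ∫ η in (-h)..0, y (s + ξ) ⬝ᵥ (P ξ η *ᵥ y (s + η)))
      =O[𝓝 t] segmentL1Dist h x y := by
  obtain ⟨K, hK⟩ := exists_eventually_norm_segments_le hx hy h t
  obtain ⟨C, hC⟩ := exists_sum_abs_entry_le hP (isCompact_Icc.prod isCompact_Icc)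
  refine IsBigO.of_bound (C * K * (2 * h)) ?_
  filter_upwards [hK] with s hs
  have hN : 0 ≤ segmentL1Dist h x y s := integral_nonneg (by linarith) fun _ _ => norm_nonneg _
  have hNdef : ∫ η in (-h)..0, ‖x (s + η) - y (s + η)‖ = segmentL1Dist h x y s := rfl
  have hinner : ∀ ξ ∈ Icc (-h) 0,
      ‖(∫ η in (-h)..0, x (s + ξ) ⬝ᵥ (P ξ η *ᵥ x (s + η)))
        - ∫ η in (-h)..0, y (s + ξ) ⬝ᵥ (P ξ η *ᵥ y (s + η))‖
      ≤ C * K * h * ‖x (s + ξ) - y (s + ξ)‖ + C * K * segmentL1Dist h x y s := by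
    intro ξ hξ
    calc _ ≤ ∫ η in (-h)..0,
          (C * K * ‖x (s + ξ) - y (s + ξ)‖ + C * K * ‖x (s + η) - y (s + η)‖) :=
          norm_integral_sub_integral_le (by linarith)
            (Continuous.intervalIntegrable (by fun_prop) _ _)
            (Continuous.intervalIntegrable (by fun_prop) _ _)
            (Continuous.intervalIntegrable (by fun_prop) _ _) fun η hη =>
              (abs_dotProduct_mulVec_sub_le (hC (ξ, η) ⟨hξ, hη⟩) (hs η hη).1
                (hs ξ hξ).2).trans_eq (by ring)
      _ = _ := by
          rw [integral_add intervalIntegrable_const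
            (Continuous.intervalIntegrable (by fun_prop) _ _), integral_const, integral_const_mul]
          simp only [hNdef, sub_neg_eq_add, zero_add, smul_eq_mul]
          ring
  rw [Real.norm_of_nonneg hN]
  calc _ ≤ ∫ ξ in (-h)..0, (C * K * h * ‖x (s + ξ) - y (s + ξ)‖ + C * K * segmentL1Dist h x y s) :=
        norm_integral_sub_integral_le (by linarith)
          (Continuous.intervalIntegrable (continuous_parametric_intervalIntegral_of_continuous'
            (by fun_prop) _ _) _ _)
          (Continuous.intervalIntegrable (continuous_parametric_intervalIntegral_of_continuous'
            (by fun_prop) _ _) _ _)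
          (Continuous.intervalIntegrable (by fun_prop) _ _) hinner
    _ = C * K * (2 * h) * segmentL1Dist h x y s := by
        rw [integral_add (f := fun ξ => C * K * h * ‖x (s + ξ) - y (s + ξ)‖)
          (Continuous.intervalIntegrable (by fun_prop) _ _) intervalIntegrable_const,
          integral_const_mul, integral_const]
        simp only [hNdef, sub_neg_eq_add, zero_add, smul_eq_mul]
        ring

theorem isBigO_integral_dotProduct_sub_segmentL1Dist (hh : 0 ≤ h) (hx : Continuous x)
    (hy : Continuous y) {P : ℝ → Matrix ι ι ℝ} (hP : Continuous P) :
    (fun s => (∫ η in (-h)..0, x s ⬝ᵥ (P η *ᵥ x (s + η)))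
      - (∫ η in (-h)..0, y s ⬝ᵥ (P η *ᵥ y (s + η)))
      - (x s - y s) ⬝ᵥ ∫ η in (-h)..0, P η *ᵥ x (s + η)) =O[𝓝 t] segmentL1Dist h x y := by
  obtain ⟨K, hK⟩ := exists_eventually_norm_segments_le hx hy h t
  obtain ⟨C, hC⟩ := exists_sum_abs_entry_le hP isCompact_Icc
  refine IsBigO.of_bound (C * K) ?_
  filter_upwards [hK] with s hs
  have hN : 0 ≤ segmentL1Dist h x y s := integral_nonneg (by linarith) fun _ _ => norm_nonneg _
  have hys : ‖y s‖ ≤ K := by simpa using (hs 0 ⟨by linarith, le_rfl⟩).2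
  have hfactor : (x s - y s) ⬝ᵥ ∫ η in (-h)..0, P η *ᵥ x (s + η) =
      (∫ η in (-h)..0, x s ⬝ᵥ (P η *ᵥ x (s + η))) - ∫ η in (-h)..0, y s ⬝ᵥ (P η *ᵥ x (s + η)) := by
    rw [dotProduct_intervalIntegral _ (Continuous.intervalIntegrable (by fun_prop) _ _),
      ← integral_sub (Continuous.intervalIntegrable (by fun_prop) _ _)
        (Continuous.intervalIntegrable (by fun_prop) _ _)]
    simp only [sub_dotProduct]
  rw [Real.norm_of_nonneg hN, hfactor, sub_sub_sub_cancel_left]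
  calc _ ≤ ∫ η in (-h)..0, C * K * ‖x (s + η) - y (s + η)‖ :=
        norm_integral_sub_integral_le (by linarith)
          (Continuous.intervalIntegrable (by fun_prop) _ _)
          (Continuous.intervalIntegrable (by fun_prop) _ _)
          (Continuous.intervalIntegrable (by fun_prop) _ _) fun η hη =>
            (abs_dotProduct_mulVec_sub_le (hC η hη) (hs η hη).1 hys).trans_eq (by simp)
    _ = C * K * segmentL1Dist h x y s := integral_const_mul _ _

theorem hasDerivAt_lyapunovKrasovskii_sub (hh : 0 ≤ h) {Pxx : Matrix ι ι ℝ} (hPxx : Pxx.IsSymm)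
    {Pxz : ℝ → Matrix ι ι ℝ} (hPxz : Continuous Pxz) {Pzz : ℝ → ℝ → Matrix ι ι ℝ}
    (hPzz : Continuous fun q : ℝ × ℝ => Pzz q.1 q.2) (Pd : Matrix ι ι ℝ)
    (hx : Continuous x) (hy : Continuous y) (hsame : ∀ θ ∈ Icc (-h) 0, x (t + θ) = y (t + θ))
    {g : ι → ℝ} (hd : HasDerivAt (x - y) g t) :
    HasDerivAt (fun s => lyapunovKrasovskii h Pxx Pxz Pzz Pd (fun θ => x (s + θ))
        - lyapunovKrasovskii h Pxx Pxz Pzz Pd (fun θ => y (s + θ)))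
      (2 * ((Pxx *ᵥ x t + ∫ η in (-h)..0, Pxz η *ᵥ x (t + η)) ⬝ᵥ g)) t := by
  have hxt : x t = y t := by simpa using hsame 0 ⟨by linarith, le_rfl⟩
  have hlead := hd.dotProduct_of_eq_zero (by simp [hxt])
    (w := fun s => Pxx *ᵥ (x s + y s) + (2 : ℝ) • ∫ η in (-h)..0, Pxz η *ᵥ x (s + η))
    (by fun_prop)
  have hrest := hasDerivAt_zero_of_isBigO (isLittleO_segmentL1Dist hh hx hy hsame)
    ((((isBigO_integral_dotProduct_sub_segmentL1Dist hh hx hy hPxz).const_mul_left 2).add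
      (isBigO_integral_integral_sub_segmentL1Dist hh hx hy hPzz)).add
      (isBigO_integral_sub_segmentL1Dist hh hx hy Pd))
  refine ((hlead.add hrest).congr_of_eventuallyEq (.of_forall fun s => ?_)).congr_deriv ?_
  · simp only [lyapunovKrasovskii, Pi.add_apply, Pi.sub_apply, add_zero, dotProduct_add,
      dotProduct_smul, smul_eq_mul]
    linear_combination dotProduct_mulVec_sub_dotProduct_mulVec hPxx (x s) (y s)
  · rw [← hxt, dotProduct_comm g]
    simp only [mulVec_add, add_dotProduct, smul_dotProduct, smul_eq_mul, add_zero]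
    ring

end LyapunovKrasovskii

theorem stmt18_general {n : ℕ} (h : ℝ) (hh : 0 < h)
    (Pxx : Matrix (Fin n) (Fin n) ℝ) (hPxx : Pxx.IsSymm)
    (Pxz : ℝ → Matrix (Fin n) (Fin n) ℝ) (hPxz : Continuous Pxz)
    (Pzz : ℝ → ℝ → Matrix (Fin n) (Fin n) ℝ)
    (hPzzc : Continuous fun q : ℝ × ℝ => Pzz q.1 q.2)
    (Pd : Matrix (Fin n) (Fin n) ℝ)
    (f g : (ℝ → Fin n → ℝ) → Fin n → ℝ)
    (hfseg : ∀ φ ψ : ℝ → Fin n → ℝ, (∀ θ ∈ Set.Icc (-h) (0:ℝ), φ θ = ψ θ) → f φ = f ψ)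
    (x y : ℝ → Fin n → ℝ) (t : ℝ)
    (hx : ∀ s, HasDerivAt x (f (fun θ => x (s + θ)) + g (fun θ => x (s + θ))) s)
    (hy : ∀ s, HasDerivAt y (f (fun θ => y (s + θ))) s)
    (hsame : ∀ θ ∈ Set.Icc (-h) (0:ℝ), x (t + θ) = y (t + θ))
    (V : (ℝ → Fin n → ℝ) → ℝ)
    (hV : V = fun φ =>
      φ 0 ⬝ᵥ (Pxx *ᵥ φ 0)
      + 2 * ∫ η in (-h)..0, φ 0 ⬝ᵥ (Pxz η *ᵥ φ η)
      + ∫ ξ in (-h)..0, ∫ η in (-h)..0, φ ξ ⬝ᵥ (Pzz ξ η *ᵥ φ η)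
      + ∫ η in (-h)..0, φ η ⬝ᵥ (Pd *ᵥ φ η))
    (Dx Dy : ℝ)
    (hDx : HasDerivAt (fun s => V fun θ => x (s + θ)) Dx t)
    (hDy : HasDerivAt (fun s => V fun θ => y (s + θ)) Dy t) :
    Dx = Dy + 2 * ((Pxx *ᵥ x t + ∫ η in (-h)..0, Pxz η *ᵥ x (t + η)) ⬝ᵥ
      g fun θ => x (t + θ)) := by
  have hxc : Continuous x := continuous_iff_continuousAt.2 fun s => (hx s).continuousAt
  have hyc : Continuous y := continuous_iff_continuousAt.2 fun s => (hy s).continuousAt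
  have hV_segment : ∀ z : ℝ → Fin n → ℝ, Continuous z → ∀ s, V (fun θ => z (s + θ)) =
      lyapunovKrasovskii h Pxx Pxz (fun ξ η => (2 * h) • Pzz ξ η) ((2 * h ^ 3) • Pd)
        (fun θ => z (s + θ)) := fun z hz s => by
    subst hV
    exact nested_eq_lyapunovKrasovskii h Pxx hPxz hPzzc Pd (φ := fun θ => z (s + θ))
      (by fun_prop)
  have hd : HasDerivAt (x - y) (g fun θ => x (t + θ)) t := by
    have hsub := (hx t).sub (hy t)
    rwa [hfseg _ _ hsame, add_sub_cancel_left] at hsub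
  have hdiff := hasDerivAt_lyapunovKrasovskii_sub hh.le hPxx hPxz
    (Pzz := fun ξ η => (2 * h) • Pzz ξ η) (by fun_prop) ((2 * h ^ 3) • Pd) hxc hyc hsame hd
  simp only [← hV_segment x hxc, ← hV_segment y hyc] at hdiff
  linarith [(hDx.sub hDy).unique hdiff]

/-- Lemma 4.1 (perturbation effect on the derivative):
D_{(f+g)}V(x_t) = D_f V(y_t) + 2 v(x_t)ᵀ g(x_t) when x_t = y_t. -/
theorem stmt18 {n : ℕ} (h : ℝ) (hh : 0 < h)
    (Pxx : Matrix (Fin n) (Fin n) ℝ) (hPxx : Pxx.IsSymm)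
    (Pxz : ℝ → Matrix (Fin n) (Fin n) ℝ) (hPxz : Continuous Pxz)
    (Pzz : ℝ → ℝ → Matrix (Fin n) (Fin n) ℝ)
    (hPzzc : Continuous fun q : ℝ × ℝ => Pzz q.1 q.2)
    (hPzzsym : ∀ ξ η, (Pzz ξ η).transpose = Pzz η ξ)
    (Pd : Matrix (Fin n) (Fin n) ℝ)
    (f g : (ℝ → Fin n → ℝ) → Fin n → ℝ)
    (hfseg : ∀ φ ψ : ℝ → Fin n → ℝ, (∀ θ ∈ Set.Icc (-h) (0:ℝ), φ θ = ψ θ) → f φ = f ψ)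
    (hgseg : ∀ φ ψ : ℝ → Fin n → ℝ, (∀ θ ∈ Set.Icc (-h) (0:ℝ), φ θ = ψ θ) → g φ = g ψ)
    (x y : ℝ → Fin n → ℝ) (t : ℝ)
    (hx : ∀ s, HasDerivAt x (f (fun θ => x (s + θ)) + g (fun θ => x (s + θ))) s)
    (hy : ∀ s, HasDerivAt y (f (fun θ => y (s + θ))) s)
    (hsame : ∀ θ ∈ Set.Icc (-h) (0:ℝ), x (t + θ) = y (t + θ))
    (V : (ℝ → Fin n → ℝ) → ℝ)
    (hV : V = fun φ =>
      φ 0 ⬝ᵥ (Pxx *ᵥ φ 0)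
      + 2 * ∫ η in (-h)..0, φ 0 ⬝ᵥ (Pxz η *ᵥ φ η)
      + ∫ ξ in (-h)..0, ∫ η in (-h)..0, φ ξ ⬝ᵥ (Pzz ξ η *ᵥ φ η)
      + ∫ η in (-h)..0, φ η ⬝ᵥ (Pd *ᵥ φ η))
    (Dx Dy : ℝ)
    (hDx : HasDerivAt (fun s => V fun θ => x (s + θ)) Dx t)
    (hDy : HasDerivAt (fun s => V fun θ => y (s + θ)) Dy t) :
    Dx = Dy + 2 * ((Pxx *ᵥ x t + ∫ η in (-h)..0, Pxz η *ᵥ x (t + η)) ⬝ᵥ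
      g fun θ => x (t + θ)) :=
  stmt18_general h hh Pxx hPxx Pxz hPxz Pzz hPzzc Pd f g hfseg x y t hx hy hsame V hV Dx Dy hDx hDy
end
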